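/- (Gap property of the Shapley value for the drastic measure.) Let D be a finite set and f ∈ D. If no g ∈ D\{f} satisfies C(f,g), then Shapley(D, I_d, f) = 0. If some g ∈ D\{f} satisfies C(f,g), then Shapley(D, I_d, f) ≥ 1/(|D| · (|D|−1)). In particular, Shapley(D, I_d, f) is either zero or at least 1/(|D|·(|D|−1)). -/

import Mathlib

open scoped BigOperators Classical

variable {α : Type*} [DecidableEq α]

/-- The Shapley value of `f` in the cooperative game `v` over the set of players `D`. -/
noncomputable def Shapley (D : Finset α) (v : Finset α → ℝ) (f : α) : ℝ :=
  ∑ B ∈ (D \ {f}).powerset,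
    ((B.card.factorial * (D.card - B.card - 1).factorial : ℕ) : ℝ) / (D.card.factorial : ℝ) *
      (v (B ∪ {f}) - v B)

/-- A finite set `E` is consistent if it contains no two distinct conflicting elements. -/
def Consistent (C : α → α → Prop) (E : Finset α) : Prop :=
  ∀ g ∈ E, ∀ h ∈ E, g ≠ h → ¬ C g h

/-- The drastic inconsistency measure: `1` if the set is inconsistent, `0` otherwise. -/
noncomputable def Idrastic (C : α → α → Prop) (E : Finset α) : ℝ :=
  if Consistent C E then 0 else 1

/-!
If `f` has no conflict partner in `D`, adding `f` to a coalition never changes the drastic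
measure, so `f` is a null player and its Shapley value vanishes. Otherwise all marginal
contributions are nonnegative, since consistency is inherited by subsets, and the single
coalition `{g}`, with `g` a conflict partner of `f`, already contributes
`1! (|D| - 2)! / |D|! = 1 / (|D| (|D| - 1))`.
-/

theorem factorial_sub_two_div_factorial {n : ℕ} (hn : 2 ≤ n) :
    ((n - 2).factorial : ℝ) / n.factorial = 1 / (n * (n - 1)) := by
  obtain ⟨m, rfl⟩ : ∃ m, n = m + 2 := ⟨n - 2, by omega⟩
  rw [Nat.add_sub_cancel, Nat.factorial_succ, Nat.factorial_succ]
  have hm : (m.factorial : ℝ) ≠ 0 := by positivity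
  push_cast
  rw [show (m : ℝ) + 2 - 1 = m + 1 by ring]
  field_simp
  ring

section ShapleyValue

variable {D : Finset α} {v : Finset α → ℝ} {f : α}

theorem shapley_eq_zero_of_forall_union_singleton_eq
    (hnull : ∀ B ⊆ D \ {f}, v (B ∪ {f}) = v B) : Shapley D v f = 0 :=
  Finset.sum_eq_zero fun B hB => by
    rw [hnull B (Finset.mem_powerset.mp hB), sub_self, mul_zero]

theorem singleton_marginal_div_le_shapley
    (hmono : ∀ B ⊆ D \ {f}, v B ≤ v (B ∪ {f})) {g : α} (hg : g ∈ D \ {f}) (hf : f ∈ D) :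
    (v ({g} ∪ {f}) - v {g}) / (D.card * (D.card - 1)) ≤ Shapley D v f := by
  have hcard : 2 ≤ D.card := by
    obtain ⟨hgD, hgf⟩ := Finset.mem_sdiff.mp hg
    exact Finset.one_lt_card.mpr ⟨f, hf, g, hgD, fun h => hgf (by simp [h])⟩
  have hsingle := Finset.single_le_sum
    (f := fun B => ((B.card.factorial * (D.card - B.card - 1).factorial : ℕ) : ℝ) /
      (D.card.factorial : ℝ) * (v (B ∪ {f}) - v B))
    (fun B hB => mul_nonneg (by positivity)
      (sub_nonneg.mpr (hmono B (Finset.mem_powerset.mp hB))))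
    (Finset.mem_powerset.mpr (Finset.singleton_subset_iff.mpr hg))
  simp only [Finset.card_singleton, Nat.factorial_one, one_mul, Nat.sub_sub, one_add_one_eq_two,
    factorial_sub_two_div_factorial hcard] at hsingle
  rwa [one_div_mul_eq_div] at hsingle

end ShapleyValue

section Consistency

variable {β : Type*} {C : β → β → Prop} {B E : Finset β}

theorem Consistent.mono (hE : Consistent C E) (hBE : B ⊆ E) : Consistent C B :=
  fun g hg h hh hne => hE g (hBE hg) h (hBE hh) hne

theorem consistent_singleton (g : β) : Consistent C {g} := fun a ha b hb hab => by
  rw [Finset.mem_singleton] at ha hb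
  exact absurd (ha.trans hb.symm) hab

theorem idrastic_mono (hBE : B ⊆ E) : Idrastic C B ≤ Idrastic C E := by
  by_cases hE : Consistent C E
  · simp only [Idrastic, hE, hE.mono hBE, if_true, le_refl]
  · unfold Idrastic
    split_ifs <;> norm_num

end Consistency

theorem consistent_union_singleton_iff {C : α → α → Prop} {B : Finset α} {f : α} :
    Consistent C (B ∪ {f}) ↔
      Consistent C B ∧ ∀ g ∈ B, g ≠ f → ¬ C f g ∧ ¬ C g f := by
  refine ⟨fun h => ⟨h.mono Finset.subset_union_left, fun g hg hgf => ⟨?_, ?_⟩⟩, ?_⟩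
  · exact h f (by simp) g (by simp [hg]) hgf.symm
  · exact h g (by simp [hg]) f (by simp) hgf
  · rintro ⟨hB, hf⟩ g hg h hh hne
    rw [Finset.mem_union, Finset.mem_singleton] at hg hh
    rcases hg with hg | rfl <;> rcases hh with hh | rfl
    · exact hB g hg h hh hne
    · exact (hf g hg hne).2
    · exact (hf h hh hne.symm).1
    · exact absurd rfl hne

theorem shapley_drastic_gap (C : α → α → Prop) (hsymm : Symmetric C)
    (D : Finset α) (f : α) (hf : f ∈ D) :
    ((∀ g ∈ D \ {f}, ¬ C f g) → Shapley D (Idrastic C) f = 0) ∧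
      ((∃ g ∈ D \ {f}, C f g) →
        1 / ((D.card : ℝ) * ((D.card : ℝ) - 1)) ≤ Shapley D (Idrastic C) f) := by
  constructor
  · intro hfree
    refine shapley_eq_zero_of_forall_union_singleton_eq fun B hB => ?_
    have hB_free : ∀ g ∈ B, g ≠ f → ¬ C f g ∧ ¬ C g f := fun g hg _ =>
      ⟨hfree g (hB hg), fun hgf => hfree g (hB hg) (hsymm hgf)⟩
    rw [Idrastic, Idrastic, consistent_union_singleton_iff, and_iff_left hB_free]
  · rintro ⟨g, hg, hfg⟩
    have hgf : g ≠ f := fun h => (Finset.mem_sdiff.mp hg).2 (by simp [h])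
    have hmarginal : Idrastic C ({g} ∪ {f}) - Idrastic C {g} = 1 := by
      have hpair : ¬ Consistent C ({g} ∪ {f}) := fun h =>
        (consistent_union_singleton_iff.mp h).2 g (by simp) hgf |>.1 hfg
      rw [Idrastic, Idrastic, if_neg hpair, if_pos (consistent_singleton g), sub_zero]
    calc 1 / ((D.card : ℝ) * (D.card - 1))
        = (Idrastic C ({g} ∪ {f}) - Idrastic C {g}) / (D.card * (D.card - 1)) := by
          rw [hmarginal]
      _ ≤ Shapley D (Idrastic C) f :=
          singleton_marginal_div_le_shapley (v := Idrastic C)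
            (fun _ _ => idrastic_mono Finset.subset_union_left) hg hf
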